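/- arXiv:2208.14894 — 2 statements merged into one kernel-verified Lean document; each statement's English description precedes it below -/
import Mathlib

section
/- Every quasiperfect graph G satisfies ω(G) = χ(G), where quasiperfect is defined inductively: the empty graph is quasiperfect, and a nonempty graph G is quasiperfect iff (1) there exists an independent set PI intersecting all maximum cliques, with every vertex of PI contained in some maximum clique, such that G[V−PI] is quasiperfect, and (2) there exists a clique PK intersecting all maximum independent sets, with every vertex of PK contained in some maximum independent set, such that G[V−PK] is quasiperfect. -/
open SimpleGraph Finset

variable {V : Type} [Fintype V] [DecidableEq V]

/-- `s` is an independent set of `G`: pairwise non-adjacent vertices. -/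
def IsIndepSet' (G : SimpleGraph V) (s : Set V) : Prop :=
  s.Pairwise fun a b => ¬ G.Adj a b

/-- The clique number of the subgraph of `G` induced on the vertex set `s`. -/
noncomputable def cliqueNumOn (G : SimpleGraph V) (s : Finset V) : ℕ :=
  sSup {n | ∃ t : Finset V, t ⊆ s ∧ G.IsClique ↑t ∧ t.card = n}

/-- The independence number of the subgraph of `G` induced on the vertex set `s`. -/
noncomputable def indepNumOn (G : SimpleGraph V) (s : Finset V) : ℕ :=
  sSup {n | ∃ t : Finset V, t ⊆ s ∧ IsIndepSet' G ↑t ∧ t.card = n}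

/-- `t` is a maximum clique of the subgraph of `G` induced on `s`. -/
def IsMaxCliqueOn (G : SimpleGraph V) (s t : Finset V) : Prop :=
  t ⊆ s ∧ G.IsClique ↑t ∧ t.card = cliqueNumOn G s

/-- `t` is a maximum independent set of the subgraph of `G` induced on `s`. -/
def IsMaxIndepOn (G : SimpleGraph V) (s t : Finset V) : Prop :=
  t ⊆ s ∧ IsIndepSet' G ↑t ∧ t.card = indepNumOn G s

/-- Quasiperfectness of the subgraph of `G` induced on the vertex set `s`,
defined inductively on the number of vertices: the empty graph is quasiperfect,
and a nonempty graph is quasiperfect iff it has a prime independent set `PI`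
and a prime clique `PK` whose removals leave quasiperfect graphs. -/
inductive QP (G : SimpleGraph V) : Finset V → Prop
  | empty : QP G ∅
  | step (s PI PK : Finset V) (hs : s.Nonempty)
      (hPIsub : PI ⊆ s) (hPIind : IsIndepSet' G ↑PI)
      (hPIint : ∀ t, IsMaxCliqueOn G s t → (PI ∩ t).Nonempty)
      (hPIcov : ∀ v ∈ PI, ∃ t, IsMaxCliqueOn G s t ∧ v ∈ t)
      (hPKsub : PK ⊆ s) (hPKclq : G.IsClique ↑PK)
      (hPKint : ∀ t, IsMaxIndepOn G s t → (PK ∩ t).Nonempty)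
      (hPKcov : ∀ v ∈ PK, ∃ t, IsMaxIndepOn G s t ∧ v ∈ t)
      (hrec1 : QP G (s \ PI)) (hrec2 : QP G (s \ PK)) : QP G s

/-- A graph is quasiperfect if its full vertex set is. -/
def Quasiperfect (G : SimpleGraph V) : Prop := QP G Finset.univ
lemma cliqueNumOn_bddAbove (G : SimpleGraph V) (s : Finset V) :
    BddAbove {n | ∃ t : Finset V, t ⊆ s ∧ G.IsClique ↑t ∧ t.card = n} :=
  ⟨Fintype.card V, fun n ⟨t, _, _, hc⟩ => hc ▸ t.card_le_univ⟩

lemma cliqueNumOn_nonempty (G : SimpleGraph V) (s : Finset V) :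
    {n | ∃ t : Finset V, t ⊆ s ∧ G.IsClique ↑t ∧ t.card = n}.Nonempty :=
  ⟨0, ∅, by simp, by simp, by simp⟩

lemma le_cliqueNumOn (G : SimpleGraph V) {s t : Finset V} (hts : t ⊆ s)
    (hc : G.IsClique ↑t) : t.card ≤ cliqueNumOn G s :=
  le_csSup (cliqueNumOn_bddAbove G s) ⟨t, hts, hc, rfl⟩

lemma exists_max_clique (G : SimpleGraph V) (s : Finset V) :
    ∃ t : Finset V, t ⊆ s ∧ G.IsClique ↑t ∧ t.card = cliqueNumOn G s := by
  have := Nat.sSup_mem (cliqueNumOn_nonempty G s) (cliqueNumOn_bddAbove G s)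
  exact this

lemma QP_coloring (G : SimpleGraph V) {s : Finset V} (h : QP G s) :
    ∃ f : V → ℕ, (∀ v ∈ s, f v < cliqueNumOn G s) ∧
      ∀ u ∈ s, ∀ v ∈ s, G.Adj u v → f u ≠ f v := by
  induction h with
  | empty => exact ⟨fun _ => 0, by simp, by simp⟩
  | step s PI PK hs hPIsub hPIind hPIint hPIcov hPKsub hPKclq hPKint hPKcov hrec1 hrec2 ih1 ih2 =>
    obtain ⟨f, hf1, hf2⟩ := ih1
    have hωpos : 1 ≤ cliqueNumOn G s := by
      obtain ⟨v, hv⟩ := hs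
      simpa using le_cliqueNumOn G (t := {v}) (by simpa using hv) (by simp)
    have hkey : cliqueNumOn G (s \ PI) < cliqueNumOn G s := by
      obtain ⟨t, hts, htc, htcard⟩ := exists_max_clique G (s \ PI)
      have hle : t.card ≤ cliqueNumOn G s :=
        le_cliqueNumOn G (hts.trans (Finset.sdiff_subset)) htc
      rcases lt_or_eq_of_le hle with h' | h'
      · omega
      · obtain ⟨x, hx⟩ := hPIint t ⟨hts.trans Finset.sdiff_subset, htc, h'⟩
        simp only [Finset.mem_inter] at hx
        exact absurd (hts hx.2) (by simp [hx.1])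
    refine ⟨fun v => if v ∈ PI then cliqueNumOn G s - 1 else f v, ?_, ?_⟩
    · intro v hv
      by_cases hvp : v ∈ PI
      · simp [hvp]; omega
      · simp only [hvp, if_false]
        have := hf1 v (Finset.mem_sdiff.mpr ⟨hv, hvp⟩)
        omega
    · intro u hu v hv hadj
      by_cases hup : u ∈ PI <;> by_cases hvp : v ∈ PI
      · exact absurd hadj (hPIind hup hvp hadj.ne)
      · have := hf1 v (Finset.mem_sdiff.mpr ⟨hv, hvp⟩)
        simp only [hup, hvp, if_true, if_false]
        omega
      · have := hf1 u (Finset.mem_sdiff.mpr ⟨hu, hup⟩)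
        simp only [hup, hvp, if_true, if_false]
        omega
      · simp only [hup, hvp, if_false]
        exact hf2 u (Finset.mem_sdiff.mpr ⟨hu, hup⟩) v (Finset.mem_sdiff.mpr ⟨hv, hvp⟩) hadj

theorem stmt_3 (G : SimpleGraph V) (h : Quasiperfect G) :
    (cliqueNumOn G Finset.univ : ℕ∞) = G.chromaticNumber := by
  obtain ⟨f, hf1, hf2⟩ := QP_coloring G h
  have hcol : G.Colorable (cliqueNumOn G Finset.univ) :=
    ⟨⟨fun v => ⟨f v, hf1 v (Finset.mem_univ v)⟩, fun {u v} hadj h' => by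
      exact hf2 u (Finset.mem_univ u) v (Finset.mem_univ v) hadj (by simpa using congrArg Fin.val h')⟩⟩
  refine le_antisymm ?_ hcol.chromaticNumber_le
  obtain ⟨t, _, htc, htcard⟩ := exists_max_clique G (Finset.univ : Finset V)
  calc ((cliqueNumOn G Finset.univ : ℕ) : ℕ∞) = (t.card : ℕ∞) := by rw [htcard]
    _ ≤ G.chromaticNumber := htc.card_le_chromaticNumber
end

section
/- Every quasiperfect graph G satisfies α(G) = χ(complement of G), i.e., the independence number of G equals the clique cover number of G. -/
open SimpleGraph Finset

variable {V : Type} [Fintype V] [DecidableEq V]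

set_option linter.unusedSectionVars false
set_option linter.unusedVariables false

lemma indepSet_bdd (G : SimpleGraph V) (s : Finset V) :
    BddAbove {n | ∃ t : Finset V, t ⊆ s ∧ IsIndepSet' G ↑t ∧ t.card = n} := by
  refine ⟨s.card, fun n ⟨t, hts, _, hc⟩ => ?_⟩
  exact hc ▸ Finset.card_le_card hts

lemma card_le_indepNumOn {G : SimpleGraph V} {s t : Finset V}
    (hts : t ⊆ s) (hind : IsIndepSet' G ↑t) : t.card ≤ indepNumOn G s :=
  le_csSup (indepSet_bdd G s) ⟨t, hts, hind, rfl⟩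

lemma exists_maxIndepOn (G : SimpleGraph V) (s : Finset V) :
    ∃ t, IsMaxIndepOn G s t := by
  have hne : ({n | ∃ t : Finset V, t ⊆ s ∧ IsIndepSet' G ↑t ∧ t.card = n}).Nonempty :=
    ⟨0, ∅, by simp [IsIndepSet']⟩
  obtain ⟨t, hts, hind, hc⟩ := Nat.sSup_mem hne (indepSet_bdd G s)
  exact ⟨t, hts, hind, hc⟩

lemma indepNumOn_sdiff_lt {G : SimpleGraph V} {s PK : Finset V} (hPKsub : PK ⊆ s)
    (hPKint : ∀ t, IsMaxIndepOn G s t → (PK ∩ t).Nonempty) :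
    indepNumOn G (s \ PK) + 1 ≤ indepNumOn G s := by
  obtain ⟨t, hts, hind, hc⟩ := exists_maxIndepOn G (s \ PK)
  have hts' : t ⊆ s := hts.trans (Finset.sdiff_subset)
  have hle : indepNumOn G (s \ PK) ≤ indepNumOn G s := hc ▸ card_le_indepNumOn hts' hind
  rcases lt_or_eq_of_le hle with hlt | heq
  · omega
  · exfalso
    have hmax : IsMaxIndepOn G s t := ⟨hts', hind, by rw [hc, heq]⟩
    obtain ⟨v, hv⟩ := hPKint t hmax
    rw [Finset.mem_inter] at hv
    have := hts hv.2
    rw [Finset.mem_sdiff] at this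
    exact this.2 hv.1

/-- Main induction: a QP set can be covered by at most `indepNumOn` cliques. -/
lemma qp_clique_cover {G : SimpleGraph V} {s : Finset V} (h : QP G s) :
    ∃ C : Finset (Finset V), (∀ t ∈ C, G.IsClique ↑t) ∧ (∀ v ∈ s, ∃ t ∈ C, v ∈ t) ∧
      C.card ≤ indepNumOn G s := by
  induction h with
  | empty => exact ⟨∅, by simp, by simp, by simp⟩
  | step s PI PK hs hPIsub hPIind hPIint hPIcov hPKsub hPKclq hPKint hPKcov hrec1 hrec2 ih1 ih2 =>
    obtain ⟨C, hclq, hcov, hcard⟩ := ih2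
    refine ⟨insert PK C, ?_, ?_, ?_⟩
    · intro t ht
      rcases Finset.mem_insert.mp ht with rfl | ht
      · exact hPKclq
      · exact hclq t ht
    · intro v hv
      by_cases hvPK : v ∈ PK
      · exact ⟨PK, Finset.mem_insert_self _ _, hvPK⟩
      · obtain ⟨t, htC, hvt⟩ := hcov v (Finset.mem_sdiff.mpr ⟨hv, hvPK⟩)
        exact ⟨t, Finset.mem_insert_of_mem htC, hvt⟩
    · calc (insert PK C).card ≤ C.card + 1 := Finset.card_insert_le _ _
        _ ≤ indepNumOn G (s \ PK) + 1 := by omega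
        _ ≤ indepNumOn G s := indepNumOn_sdiff_lt hPKsub hPKint

theorem stmt_19 (G : SimpleGraph V) (h : Quasiperfect G) :
    (indepNumOn G Finset.univ : ℕ∞) = Gᶜ.chromaticNumber := by
  apply le_antisymm
  · -- α ≤ χ(Gᶜ): a max independent set is a clique in Gᶜ
    obtain ⟨t, _, hind, hc⟩ := exists_maxIndepOn G (Finset.univ : Finset V)
    have hclq : Gᶜ.IsClique ↑t := by
      intro a ha b hb hab
      exact ⟨hab, hind ha hb hab⟩
    calc (indepNumOn G Finset.univ : ℕ∞) = (t.card : ℕ∞) := by rw [hc]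
      _ ≤ Gᶜ.chromaticNumber := hclq.card_le_chromaticNumber
  · -- χ(Gᶜ) ≤ α : color by cliques in the cover
    obtain ⟨C, hclq, hcov, hcard⟩ := qp_clique_cover h
    classical
    have hcol : Gᶜ.Colorable C.card := by
      by_cases hC : ∀ v : V, ∃ t ∈ C, v ∈ t
      · let f : V → {t // t ∈ C} := fun v => ⟨(hC v).choose, (hC v).choose_spec.1⟩
        have hf : ∀ v : V, v ∈ (f v).1 := fun v => (hC v).choose_spec.2
        have : Gᶜ.Colorable (Fintype.card {t // t ∈ C}) := by
          refine Coloring.colorable (Coloring.mk f fun {a b} hab => ?_)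
          intro hfab
          obtain ⟨hne, hnadj⟩ := hab
          have ha : a ∈ (f a).1 := hf a
          have hb : b ∈ (f a).1 := by rw [hfab]; exact hf b
          exact hnadj (hclq _ (f a).2 (by exact_mod_cast ha) (by exact_mod_cast hb) hne)
        simpa [Fintype.card_coe] using this
      · push_neg at hC
        obtain ⟨v, hv⟩ := hC
        exact absurd (hcov v (Finset.mem_univ v)) (by simpa using hv)
    calc Gᶜ.chromaticNumber ≤ (C.card : ℕ∞) := hcol.chromaticNumber_le
      _ ≤ (indepNumOn G Finset.univ : ℕ∞) := by exact_mod_cast hcard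
end
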